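/- In the deterministic sampling elimination procedure applied to a periodic pattern p with period q, the set of copies that can never be distinguished from copy 0 consists exactly of the copies shifted by integer multiples of q: for any shift d with 0 ≤ d ≤ m/2, the shifted copy of p agrees with the unshifted copy on all commonly covered positions if and only if q divides d. -/

import Mathlib

/-!
Agreement of the copy shifted by `d` with copy `0` says exactly that `d` is a period of `p`.
Periods are closed under addition, and as long as two periods fit into the word together
(`d + q ≤ m`) their difference is a period as well; so `d % q` is a period, and minimality
of `q` forces `d % q = 0`.
-/

namespace Word

variable {α : Type*} {m : ℕ} {p : Fin m → α}

def IsPeriod (p : Fin m → α) (d : ℕ) : Prop :=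
  ∀ i j : Fin m, (i : ℕ) = j + d → p i = p j

theorem isPeriod_iff {d : ℕ} :
    IsPeriod p d ↔
      ∀ k, ∀ hk : k < m, d ≤ k → ∀ h : k - d < m, p ⟨k, hk⟩ = p ⟨k - d, h⟩ := by
  constructor
  · intro hp k hk hdk h
    exact hp ⟨k, hk⟩ ⟨k - d, h⟩ (by simp only; omega)
  · rintro hp ⟨i, hi⟩ ⟨j, hj⟩ (hij : i = j + d)
    subst hij
    simpa using hp (j + d) hi (by omega) (by omega)

theorem isPeriod_zero : IsPeriod p 0 := by
  intro i j hij
  exact congrArg p (Fin.ext (by simpa using hij))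

theorem IsPeriod.add {a b : ℕ} (ha : IsPeriod p a) (hb : IsPeriod p b) :
    IsPeriod p (a + b) := by
  intro i j hij
  let l : Fin m := ⟨j + b, by omega⟩
  calc p i = p l := ha i l (by simp only [l]; omega)
    _ = p j := hb l j rfl

theorem IsPeriod.mul {q : ℕ} (hq : IsPeriod p q) (c : ℕ) : IsPeriod p (q * c) := by
  induction c with
  | zero => exact isPeriod_zero
  | succ c ih => simpa only [Nat.mul_succ] using ih.add hq

theorem IsPeriod.sub {d q : ℕ} (hd : IsPeriod p d) (hq : IsPeriod p q) (hqd : q ≤ d)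
    (hdq : d + q ≤ m) : IsPeriod p (d - q) := by
  rintro i j hij
  by_cases hid : d ≤ i
  · let l : Fin m := ⟨i - d, by omega⟩
    calc p i = p l := hd i l (by simp only [l]; omega)
      _ = p j := (hq j l (by simp only [l]; omega)).symm
  · -- `i + q < d + q ≤ m` keeps the detour inside the word
    let l : Fin m := ⟨i + q, by omega⟩
    calc p i = p l := (hq l i rfl).symm
      _ = p j := hd l j (by simp only [l]; omega)

theorem IsPeriod.mod {d q : ℕ} (hd : IsPeriod p d) (hq : IsPeriod p q) (hdq : d + q ≤ m) :
    IsPeriod p (d % q) := by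
  induction d using Nat.strong_induction_on with
  | _ d ih =>
    rcases Nat.lt_or_ge d q with hlt | hge
    · rwa [Nat.mod_eq_of_lt hlt]
    · rcases Nat.eq_zero_or_pos q with rfl | hq0
      · rwa [Nat.mod_zero]
      rw [Nat.mod_eq_sub_mod hge]
      exact ih (d - q) (by omega) (hd.sub hq hge hdq) (by omega)

end Word

open Word

/-- For a periodic pattern `p` with least period `q`, a shifted copy (shift
`d ≤ m/2`) agrees with the unshifted copy on all commonly covered positions if
and only if `q` divides `d`. -/
theorem shift_agrees_iff_period_dvd {α : Type*} {m : ℕ} (p : Fin m → α) (q : ℕ)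
    (hq1 : 1 ≤ q) (hq2 : q ≤ m / 2)
    (hper : ∀ k, ∀ hk : k < m, q ≤ k → ∀ h : k - q < m, p ⟨k, hk⟩ = p ⟨k - q, h⟩)
    (hleast : ∀ d, 1 ≤ d → d < q →
      ∃ k, ∃ hk : k < m, d ≤ k ∧ p ⟨k, hk⟩ ≠ p ⟨k - d, by omega⟩) :
    ∀ d, d ≤ m / 2 →
      ((∀ k, ∀ hk : k < m, d ≤ k → ∀ h : k - d < m, p ⟨k, hk⟩ = p ⟨k - d, h⟩)
        ↔ q ∣ d) := by
  intro d hd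
  have hqper : IsPeriod p q := isPeriod_iff.2 hper
  rw [← isPeriod_iff]
  constructor
  · intro hdper
    have hmod : IsPeriod p (d % q) := hdper.mod hqper (by omega)
    by_contra hndvd
    obtain ⟨k, hk, hk_le, hne⟩ :=
      hleast (d % q) (Nat.pos_of_ne_zero (mt Nat.dvd_of_mod_eq_zero hndvd)) (Nat.mod_lt d hq1)
    exact hne (isPeriod_iff.1 hmod k hk hk_le _)
  · rintro ⟨c, rfl⟩
    exact hqper.mul c
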